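/- Let β₂ > 0 and a ≥ 0, α₂ > 0. The cubic equation t³ − β₂t² − α₂a² = 0 has a unique positive real root t, and with this root, the matrix V = (1/t)·W, for any matrix W with ‖W‖_F = a, satisfies (α₂‖V‖_F² + β₂)·V = W (when a > 0). -/

import Mathlib

open Matrix

/-- Squared Frobenius norm. -/
noncomputable def fsq {ι κ : Type*} [Fintype ι] [Fintype κ] (A : Matrix ι κ ℝ) : ℝ :=
  ∑ i, ∑ j, (A i j) ^ 2

/-- Frobenius norm. -/
noncomputable def fnorm {ι κ : Type*} [Fintype ι] [Fintype κ] (A : Matrix ι κ ℝ) : ℝ :=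
  Real.sqrt (fsq A)

/-!
Writing the cubic as `t² (t - β₂) = α₂ a²`, its positive roots lie in `[β₂, ∞)`, where the
left-hand side increases strictly from `0` to `∞`; this gives existence (intermediate value
theorem) and uniqueness. Since `‖t⁻¹ W‖_F² = a² / t²`, the root equation says exactly that the
scalar `α₂ ‖t⁻¹ W‖_F² + β₂` equals `t`.
-/

section DepressedCubic

variable {c : ℝ}

theorem exists_le_sq_mul_sub_eq (β : ℝ) (hc : 0 ≤ c) : ∃ t, β ≤ t ∧ t ^ 2 * (t - β) = c := by
  set M := |β| + c + 1
  have hβM : β ≤ M := by linarith [le_abs_self β]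
  have hM : c ≤ M ^ 2 * (M - β) := by
    have h1 : 1 ≤ M := by linarith [abs_nonneg β]
    calc c ≤ M := by linarith [abs_nonneg β]
      _ ≤ M ^ 2 := le_self_pow₀ h1 two_ne_zero
      _ ≤ M ^ 2 * (M - β) := le_mul_of_one_le_right (sq_nonneg M) (by linarith [le_abs_self β])
  have hcont : ContinuousOn (fun t : ℝ => t ^ 2 * (t - β)) (Set.Icc β M) := by fun_prop
  obtain ⟨t, ht, hteq⟩ := intermediate_value_Icc hβM hcont ⟨by simpa using hc, hM⟩
  exact ⟨t, ht.1, hteq⟩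

theorem strictMonoOn_sq_mul_sub {β : ℝ} (hβ : 0 ≤ β) :
    StrictMonoOn (fun t : ℝ => t ^ 2 * (t - β)) (Set.Ici β) := by
  intro s hs t ht hst
  have hs0 : 0 ≤ s := hβ.trans hs
  calc s ^ 2 * (s - β) ≤ s ^ 2 * (t - β) := by gcongr
    _ < t ^ 2 * (t - β) := by
      gcongr
      exact sub_pos.2 (lt_of_le_of_lt hs hst)

theorem le_of_sq_mul_sub_eq {β t : ℝ} (hc : 0 ≤ c) (ht : 0 < t) (h : t ^ 2 * (t - β) = c) :
    β ≤ t := by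
  have : 0 ≤ t - β := nonneg_of_mul_nonneg_right (h ▸ hc) (by positivity)
  linarith

end DepressedCubic

section Frobenius

variable {ι κ : Type*} [Fintype ι] [Fintype κ]

theorem fsq_nonneg (A : Matrix ι κ ℝ) : 0 ≤ fsq A := by
  unfold fsq
  positivity

theorem fnorm_sq (A : Matrix ι κ ℝ) : fnorm A ^ 2 = fsq A :=
  Real.sq_sqrt (fsq_nonneg A)

theorem fsq_smul (k : ℝ) (A : Matrix ι κ ℝ) : fsq (k • A) = k ^ 2 * fsq A := by
  simp only [fsq, Matrix.smul_apply, smul_eq_mul, mul_pow, Finset.mul_sum]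

end Frobenius

theorem stmt_15_general {r n : ℕ} (α₂ β₂ a : ℝ) (hα₂ : 0 < α₂) (hβ₂ : 0 < β₂) :
    ∃ t : ℝ, 0 < t ∧ t ^ 3 - β₂ * t ^ 2 - α₂ * a ^ 2 = 0 ∧
      (∀ s : ℝ, 0 < s → s ^ 3 - β₂ * s ^ 2 - α₂ * a ^ 2 = 0 → s = t) ∧
      (0 < a → ∀ W : Matrix (Fin r) (Fin n) ℝ, fnorm W = a →
        (α₂ * fsq (t⁻¹ • W) + β₂) • (t⁻¹ • W) = W) := by
  have hc : 0 ≤ α₂ * a ^ 2 := by positivity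
  have cubic_iff (s : ℝ) : s ^ 3 - β₂ * s ^ 2 - α₂ * a ^ 2 = 0 ↔ s ^ 2 * (s - β₂) = α₂ * a ^ 2 :=
    ⟨fun h => by linear_combination h, fun h => by linear_combination h⟩
  obtain ⟨t, hβt, ht⟩ := exists_le_sq_mul_sub_eq β₂ hc
  have ht0 : 0 < t := hβ₂.trans_le hβt
  refine ⟨t, ht0, (cubic_iff t).2 ht, fun s hs hseq => ?_, fun _ W hW => ?_⟩
  · rw [cubic_iff] at hseq
    exact strictMonoOn_sq_mul_sub hβ₂.le |>.injOn (le_of_sq_mul_sub_eq hc hs hseq) hβt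
      (hseq.trans ht.symm)
  · have hcoef : α₂ * fsq (t⁻¹ • W) + β₂ = t := by
      rw [fsq_smul, ← fnorm_sq, hW]
      field_simp
      linear_combination -ht
    rw [hcoef, smul_smul, mul_inv_cancel₀ ht0.ne', one_smul]

theorem stmt_15 {r n : ℕ} (α₂ β₂ a : ℝ) (hα₂ : 0 < α₂) (hβ₂ : 0 < β₂) (ha : 0 ≤ a) :
    ∃ t : ℝ, 0 < t ∧ t ^ 3 - β₂ * t ^ 2 - α₂ * a ^ 2 = 0 ∧
      (∀ s : ℝ, 0 < s → s ^ 3 - β₂ * s ^ 2 - α₂ * a ^ 2 = 0 → s = t) ∧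
      (0 < a → ∀ W : Matrix (Fin r) (Fin n) ℝ, fnorm W = a →
        (α₂ * fsq (t⁻¹ • W) + β₂) • (t⁻¹ • W) = W) :=
  stmt_15_general α₂ β₂ a hα₂ hβ₂
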